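/- Let Aff(F_5) = ⟨(1 2 3 4 5), (2 3 5 4)⟩ ≤ Perm (Fin 5). Suppose a_1, b_1, …, a_g, b_g, c_1, …, c_n are elements of Aff(F_5) such that each c_j has cycle type {5} or {2,2}, and the number of j with cycle type of c_j equal to {2,2} is odd. Then (∏_{i=1}^g [a_i,b_i]) · (∏_{j=1}^n c_j) ≠ 1. (This is the obstruction, used in Theorem 3.9(6b), showing that a 5-fold covering with an odd number of [2,2,1] branch values and all other branch values of type [5] cannot have monodromy group conjugate to D_5 or Aff(F_5).) -/

import Mathlib

/-!
The slope `m` of an affine permutation `x ↦ m * x + b` of `𝔽₅` is multiplicative, with values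
in the abelian group `𝔽₅ˣ`, so it kills commutators. An affine map with `m ≠ 1` has a fixed
point, so a 5-cycle has slope `1`; a double transposition is an involution with a fixed point,
so its slope is a square root of `1` other than `1` (slope `1` plus a fixed point forces the
identity), i.e. `-1`. The product therefore has slope `(-1) ^ odd = -1 ≠ 1`.
-/

open Equiv
open scoped commutatorElement

/-- The affine subgroup `Aff(F₅) = ⟨(1 2 3 4 5), (2 3 5 4)⟩` of `Perm (Fin 5)`. -/
def Aff5 : Subgroup (Equiv.Perm (Fin 5)) :=
  Subgroup.closure {c[0, 1, 2, 3, 4], c[1, 2, 4, 3]}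

open Finset

namespace Equiv.Perm

section Affine

variable {K : Type*} [Field K] {σ τ : Perm K}

def affinePerms (K : Type*) [Field K] : Subgroup (Perm K) where
  carrier := {σ | ∃ m b : K, ∀ x, σ x = m * x + b}
  mul_mem' := by
    rintro σ τ ⟨m, b, hσ⟩ ⟨m', b', hτ⟩
    exact ⟨m * m', m * b' + b, fun x => by rw [mul_apply, hτ, hσ]; ring⟩
  one_mem' := ⟨1, 0, fun x => by simp⟩
  inv_mem' := by
    rintro σ ⟨m, b, hσ⟩
    have hm : m ≠ 0 := by
      rintro rfl
      exact zero_ne_one (σ.injective (by simp [hσ]))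
    exact ⟨m⁻¹, -(m⁻¹ * b), fun x => by rw [inv_eq_iff_eq, hσ]; field_simp; ring⟩

-- The coefficient `m` of `x ↦ m * x + b` on `affinePerms K`; meaningless elsewhere.
def slope (σ : Perm K) : K := σ 1 - σ 0

theorem apply_eq_slope_mul_add (hσ : σ ∈ affinePerms K) (x : K) :
    σ x = slope σ * x + σ 0 := by
  obtain ⟨m, b, h⟩ := hσ
  simp only [slope, h]
  ring

@[simp]
theorem slope_one : slope (1 : Perm K) = 1 := by
  simp [slope]

theorem slope_mul (hσ : σ ∈ affinePerms K) : slope (σ * τ) = slope σ * slope τ := by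
  simp only [slope, mul_apply, apply_eq_slope_mul_add hσ (τ _)]
  ring

theorem slope_mul_slope_inv (hσ : σ ∈ affinePerms K) : slope σ * slope σ⁻¹ = 1 := by
  rw [← slope_mul hσ, mul_inv_cancel, slope_one]

theorem slope_commutatorElement (hσ : σ ∈ affinePerms K) (hτ : τ ∈ affinePerms K) :
    slope ⁅σ, τ⁆ = 1 := by
  have hστ := mul_mem hσ hτ
  rw [commutatorElement_def, slope_mul (mul_mem hστ (inv_mem hσ)), slope_mul hστ,
    slope_mul hσ]
  linear_combination (slope τ * slope τ⁻¹) * slope_mul_slope_inv hσ + slope_mul_slope_inv hτ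

theorem slope_prod_ofFn {n : ℕ} {f : Fin n → Perm K} (hf : ∀ i, f i ∈ affinePerms K) :
    slope (List.ofFn f).prod = ∏ i, slope (f i) := by
  induction n with
  | zero => simp
  | succ n ih =>
    rw [List.ofFn_succ, List.prod_cons, slope_mul (hf 0), ih fun i => hf i.succ,
      Fin.prod_univ_succ]

-- With `m := slope σ ≠ 1`, the point `σ 0 / (1 - m)` is fixed.
theorem slope_eq_one_of_forall_apply_ne (hσ : σ ∈ affinePerms K) (h : ∀ x, σ x ≠ x) :
    slope σ = 1 := by
  by_contra hm
  have hm' : 1 - slope σ ≠ 0 := sub_ne_zero.2 (Ne.symm hm)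
  apply h (σ 0 / (1 - slope σ))
  rw [apply_eq_slope_mul_add hσ]
  field_simp
  ring

theorem eq_one_of_slope_eq_one_of_apply_eq_self (hσ : σ ∈ affinePerms K) (h : slope σ = 1)
    {x : K} (hx : σ x = x) : σ = 1 := by
  have h0 : σ 0 = 0 := by
    rw [apply_eq_slope_mul_add hσ, h] at hx
    linear_combination hx
  ext y
  rw [apply_eq_slope_mul_add hσ, h, h0, one_mul, add_zero, one_apply]

theorem slope_eq_neg_one_of_mul_self_eq_one (hσ : σ ∈ affinePerms K) (hsq : σ * σ = 1)
    (hne : σ ≠ 1) {x : K} (hx : σ x = x) : slope σ = -1 := by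
  have : slope σ * slope σ = 1 := by rw [← slope_mul hσ, hsq, slope_one]
  exact (mul_self_eq_one_iff.1 this).resolve_left
    fun h => hne (eq_one_of_slope_eq_one_of_apply_eq_self hσ h hx)

theorem prod_commutatorElement_mul_prod_ne_one [DecidableEq K] (hK : (-1 : K) ≠ 1) {g n : ℕ}
    {a b : Fin g → Perm K} {c : Fin n → Perm K} (ha : ∀ i, a i ∈ affinePerms K)
    (hb : ∀ i, b i ∈ affinePerms K) (hc : ∀ j, c j ∈ affinePerms K)
    (hslope : ∀ j, slope (c j) = 1 ∨ slope (c j) = -1)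
    (hodd : Odd (univ.filter fun j => slope (c j) = -1).card) :
    (List.ofFn fun i => ⁅a i, b i⁆).prod * (List.ofFn c).prod ≠ 1 := by
  have hab (i : Fin g) : ⁅a i, b i⁆ ∈ affinePerms K := by
    rw [commutatorElement_def]
    exact mul_mem (mul_mem (mul_mem (ha i) (hb i)) (inv_mem (ha i))) (inv_mem (hb i))
  have hslope_ab : ∏ i, slope ⁅a i, b i⁆ = 1 :=
    prod_eq_one fun i _ => slope_commutatorElement (ha i) (hb i)
  have hslope_c : ∏ j, slope (c j) = -1 := by
    rw [← prod_filter_mul_prod_filter_not univ fun j => slope (c j) = -1,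
      prod_congr rfl fun j hj => (mem_filter.1 hj).2,
      prod_congr rfl fun j hj => (hslope j).resolve_right (mem_filter.1 hj).2,
      prod_const, prod_const_one, mul_one, hodd.neg_one_pow]
  intro h
  apply hK
  calc (-1 : K) = slope ((List.ofFn fun i => ⁅a i, b i⁆).prod * (List.ofFn c).prod) := by
        rw [slope_mul (list_prod_mem (List.forall_mem_ofFn_iff.2 hab)), slope_prod_ofFn hab,
          slope_prod_ofFn hc, hslope_ab, hslope_c, one_mul]
    _ = 1 := by rw [h, slope_one]

end Affine

section CycleType

variable {α : Type*} [Fintype α] [DecidableEq α] {σ : Perm α}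

theorem apply_ne_self_of_sum_cycleType_eq_card (h : σ.cycleType.sum = Fintype.card α)
    (x : α) : σ x ≠ x := by
  rw [sum_cycleType, card_eq_iff_eq_univ] at h
  exact mem_support.1 (h ▸ mem_univ x)

theorem exists_apply_eq_self_of_sum_cycleType_lt_card (h : σ.cycleType.sum < Fintype.card α) :
    ∃ x, σ x = x := by
  rw [sum_cycleType, ← card_univ] at h
  obtain ⟨x, -, hx⟩ := exists_mem_notMem_of_card_lt_card h
  exact ⟨x, notMem_support.1 hx⟩

end CycleType

end Equiv.Perm

instance fact_prime_five : Fact (Nat.Prime 5) := ⟨Nat.prime_five⟩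

-- `ZMod 5` is `Fin 5` by definition; the generators are `x ↦ x + 1` and `x ↦ 2 * x`.
theorem Aff5_le_affinePerms : Aff5 ≤ (Perm.affinePerms (ZMod 5) : Subgroup (Perm (Fin 5))) := by
  refine (Subgroup.closure_le _).2 ?_
  rintro σ (rfl | rfl)
  · exact ⟨1, 1, by decide⟩
  · exact ⟨2, 0, by decide⟩

theorem slope_eq_one_of_cycleType_eq_five {σ : Perm (Fin 5)} (hσ : σ ∈ Aff5)
    (h : σ.cycleType = {5}) : Perm.slope (K := ZMod 5) σ = 1 := by
  have hfree : ∀ x : Fin 5, σ x ≠ x :=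
    Perm.apply_ne_self_of_sum_cycleType_eq_card (by simp [h])
  exact Perm.slope_eq_one_of_forall_apply_ne (Aff5_le_affinePerms hσ) hfree

theorem slope_eq_neg_one_of_cycleType_eq_two_two {σ : Perm (Fin 5)} (hσ : σ ∈ Aff5)
    (h : σ.cycleType = {2, 2}) : Perm.slope (K := ZMod 5) σ = -1 := by
  have hord : orderOf σ = 2 := by
    rw [← Perm.lcm_cycleType, h]
    rfl
  have hsq : σ * σ = 1 := by rw [← sq, ← hord, pow_orderOf_eq_one]
  have hne : σ ≠ 1 := by
    rintro rfl
    simp at h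
  obtain ⟨x, hx⟩ := Perm.exists_apply_eq_self_of_sum_cycleType_lt_card (σ := σ) (by simp [h])
  exact Perm.slope_eq_neg_one_of_mul_self_eq_one (Aff5_le_affinePerms hσ) hsq hne hx

/-- If `a i, b i, c j ∈ Aff(F₅)`, each `c j` has cycle type `{5}` or `{2,2}`, and
the number of `j` with `(c j)` of cycle type `{2,2}` is odd, then
`∏ ⁅a i, b i⁆ · ∏ c j ≠ 1`. -/
theorem no_generating_vector_in_Aff5_with_odd_number_of_double_transpositions
    (g n : ℕ) (a b : Fin g → Equiv.Perm (Fin 5)) (c : Fin n → Equiv.Perm (Fin 5))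
    (ha : ∀ i, a i ∈ Aff5) (hb : ∀ i, b i ∈ Aff5) (hc : ∀ j, c j ∈ Aff5)
    (htype : ∀ j, (c j).cycleType = {5} ∨ (c j).cycleType = {2, 2})
    (hodd : Odd (Finset.univ.filter fun j =>
      (c j).cycleType = ({2, 2} : Multiset ℕ)).card) :
    (List.ofFn fun i => ⁅a i, b i⁆).prod * (List.ofFn c).prod ≠ 1 := by
  have hslope (j : Fin n) : Perm.slope (K := ZMod 5) (c j) = -1 ↔ (c j).cycleType = {2, 2} := by
    refine ⟨fun h => (htype j).resolve_left fun h5 => ?_,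
      slope_eq_neg_one_of_cycleType_eq_two_two (hc j)⟩
    rw [slope_eq_one_of_cycleType_eq_five (hc j) h5] at h
    exact absurd h (by decide)
  refine Perm.prod_commutatorElement_mul_prod_ne_one (K := ZMod 5) (by decide)
    (fun i => Aff5_le_affinePerms (ha i)) (fun i => Aff5_le_affinePerms (hb i))
    (fun j => Aff5_le_affinePerms (hc j)) (fun j => ?_) ?_
  · exact (htype j).imp (slope_eq_one_of_cycleType_eq_five (hc j))
      (slope_eq_neg_one_of_cycleType_eq_two_two (hc j))
  · rwa [filter_congr fun j _ => hslope j]
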